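/- A set system 𝒞 on X is closed (i.e., for all nonempty A ⊆ X, A ∈ 𝒞 iff cl(A) = A) if and only if 𝒞 is closed under pairwise nonempty intersection: A, B ∈ 𝒞 and A ∩ B ≠ ∅ imply A ∩ B ∈ 𝒞, assuming 𝒞 contains all singletons and X. -/

import Mathlib

/-!
When `X` is finite, `cl 𝒞 A` is a finite intersection of members of `𝒞`, all containing `A`;
for nonempty `A`, closure under nonempty pairwise intersections puts it in `𝒞` by induction
(`univ ∈ 𝒞` handles the empty intersection). Conversely, for `A, B ∈ 𝒞` the closure of `A ∩ B`
lies in both `A` and `B`.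
-/

/-- Closure function of a set system: intersection of all members containing `A`
(empty intersection yields the full set). -/
def SetSys.cl {X : Type*} (𝒞 : Set (Set X)) (A : Set X) : Set X :=
  ⋂₀ {C | C ∈ 𝒞 ∧ A ⊆ C}

/-- `𝒞` is a `k`-weak hierarchy: for any `k+1` members, one of them can be dropped
without changing the total intersection. -/
def SetSys.kWeak {X : Type*} (𝒞 : Set (Set X)) (k : ℕ) : Prop :=
  ∀ A : Fin (k + 1) → Set X, (∀ i, A i ∈ 𝒞) →
    ∃ j, (⋂ i, A i) = ⋂ i ∈ Finset.univ.erase j, A i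

namespace SetSys

variable {X : Type*} {𝒞 : Set (Set X)} {A C : Set X}

lemma subset_cl : A ⊆ cl 𝒞 A :=
  fun _ hx _ hC => hC.2 hx

lemma cl_subset_of_mem (hC : C ∈ 𝒞) (hAC : A ⊆ C) : cl 𝒞 A ⊆ C :=
  Set.sInter_subset_of_mem ⟨hC, hAC⟩

lemma cl_eq_self_of_mem (hA : A ∈ 𝒞) : cl 𝒞 A = A :=
  (cl_subset_of_mem hA subset_rfl).antisymm subset_cl

lemma sInter_mem_of_inter_mem (huniv : Set.univ ∈ 𝒞)
    (hint : ∀ A B : Set X, A ∈ 𝒞 → B ∈ 𝒞 → (A ∩ B).Nonempty → A ∩ B ∈ 𝒞)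
    {S : Set (Set X)} (hS : S.Finite) (hS𝒞 : S ⊆ 𝒞) (hne : (⋂₀ S).Nonempty) : ⋂₀ S ∈ 𝒞 := by
  induction S, hS using Set.Finite.induction_on with
  | empty => simpa using huniv
  | @insert C S _ _ ih =>
    rw [Set.sInter_insert] at hne ⊢
    have hS : ⋂₀ S ∈ 𝒞 :=
      ih (fun _ hD => hS𝒞 (Set.mem_insert_of_mem _ hD)) (hne.mono Set.inter_subset_right)
    exact hint C _ (hS𝒞 (Set.mem_insert _ _)) hS hne

lemma cl_mem [Finite X] (huniv : Set.univ ∈ 𝒞)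
    (hint : ∀ A B : Set X, A ∈ 𝒞 → B ∈ 𝒞 → (A ∩ B).Nonempty → A ∩ B ∈ 𝒞)
    (hA : A.Nonempty) : cl 𝒞 A ∈ 𝒞 :=
  sInter_mem_of_inter_mem huniv hint (Set.toFinite _) (fun _ hC => hC.1) (hA.mono subset_cl)

end SetSys

open SetSys in
theorem stmt18_general {X : Type*} [Fintype X] (𝒞 : Set (Set X))
    (huniv : Set.univ ∈ 𝒞) :
    (∀ A : Set X, A.Nonempty → (A ∈ 𝒞 ↔ SetSys.cl 𝒞 A = A)) ↔
      (∀ A B : Set X, A ∈ 𝒞 → B ∈ 𝒞 → (A ∩ B).Nonempty → A ∩ B ∈ 𝒞) := by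
  constructor
  · intro hclosed A B hA hB hAB
    rw [hclosed _ hAB]
    exact (Set.subset_inter (cl_subset_of_mem hA Set.inter_subset_left)
      (cl_subset_of_mem hB Set.inter_subset_right)).antisymm subset_cl
  · intro hint A hA
    refine ⟨cl_eq_self_of_mem, fun hcl => ?_⟩
    rw [← hcl]
    exact cl_mem huniv hint hA

/-- A clustering system is closed iff it is closed under pairwise nonempty intersection. -/
theorem stmt18 {X : Type*} [Fintype X] (𝒞 : Set (Set X))
    (hne : ∀ C ∈ 𝒞, C.Nonempty) (huniv : Set.univ ∈ 𝒞) (hsing : ∀ x : X, {x} ∈ 𝒞) :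
    (∀ A : Set X, A.Nonempty → (A ∈ 𝒞 ↔ SetSys.cl 𝒞 A = A)) ↔
      (∀ A B : Set X, A ∈ 𝒞 → B ∈ 𝒞 → (A ∩ B).Nonempty → A ∩ B ∈ 𝒞) :=
  stmt18_general 𝒞 huniv
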